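/- arXiv:2301.09367 — 4 statements merged into one kernel-verified Lean document; each statement's English description precedes it below -/
import Mathlib

section
/- Let H be a finite group of order e, and let φ: H → Aut(Z) be a homomorphism such that each φ(h) is either the identity or negation (property (*)). Define correspondingly the semidirect products Z ⋊_φ H and Z_p ⋊_φ H for each prime p. Fix a type λ = (λ_0,…,λ_{e-1}). If for infinitely many primes p every subset of Z_p ⋊_φ H \ {id} of type λ is sequenceable, then every subset of Z ⋊_φ H \ {id} of type λ is sequenceable. -/
open scoped Classical

/-- The `i`-th partial sum (partial product) of a list in a group: `s_i = x_1 ⋯ x_i`, `s_0 = 1`. -/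
noncomputable def PartialSum {G : Type*} [Group G] (l : List G) (i : ℕ) : G := (l.take i).prod

/-- A finite set `S` of non-identity elements of a group is sequenceable if its elements admit
an ordering whose partial sums `s_0, …, s_k` are pairwise distinct, except possibly `s_0 = s_k`. -/
def Sequenceable {G : Type*} [Group G] (S : Finset G) : Prop :=
  ∃ l : List G, l.Nodup ∧ l.toFinset = S ∧
    ∀ i j : ℕ, i < j → j ≤ l.length → ¬(i = 0 ∧ j = l.length) →
      PartialSum l i ≠ PartialSum l j

/-- The homomorphism `H →* MulAut (Multiplicative A)` induced by a sign character
`ε : H →* ℤˣ`: each `h` acts on the abelian group `A` as `±identity` (property (*)). -/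
def signAut (A : Type*) [AddCommGroup A] {H : Type*} [Group H] (ε : H →* ℤˣ) :
    H →* MulAut (Multiplicative A) :=
  MonoidHom.mk'
    (fun h => AddEquiv.toMultiplicative ((DistribMulAction.toAddAut ℤˣ A) (ε h)))
    (by intro a b; simp only [map_mul]; rfl)

/-- If a group hom `f` is injective on `S` and `S.image f` is sequenceable, so is `S`. -/
lemma sequenceable_of_image {G G' : Type*} [Group G] [Group G'] (f : G →* G')
    (S : Finset G) (hinj : Set.InjOn f S) (h : Sequenceable (S.image f)) :
    Sequenceable S := by
  classical
  obtain ⟨l', hnd, hfin, hps⟩ := h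
  set g : G' → G := fun y => if h : ∃ s ∈ S, f s = y then h.choose else 1 with hg
  have hgS : ∀ y ∈ S.image f, g y ∈ S ∧ f (g y) = y := by
    intro y hy
    rw [Finset.mem_image] at hy
    have hex : ∃ s ∈ S, f s = y := by obtain ⟨s, hs, hfs⟩ := hy; exact ⟨s, hs, hfs⟩
    simp only [hg, dif_pos hex]
    exact ⟨hex.choose_spec.1, hex.choose_spec.2⟩
  set l := l'.map g with hl
  have hmem : ∀ y ∈ l', y ∈ S.image f := fun y hy => hfin ▸ List.mem_toFinset.2 hy
  have hlf : l.map f = l' := by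
    rw [hl, List.map_map]
    conv_rhs => rw [← List.map_id l']
    refine List.map_congr_left ?_
    intro y hy; exact (hgS y (hmem y hy)).2
  have hndl : l.Nodup := by
    have : (l.map f).Nodup := hlf ▸ hnd
    exact this.of_map f
  have hsub : l.toFinset ⊆ S := by
    intro x hx
    rw [List.mem_toFinset, hl, List.mem_map] at hx
    obtain ⟨y, hy, rfl⟩ := hx
    exact (hgS y (hmem y hy)).1
  have hcard : S.card ≤ l.toFinset.card := by
    have h1 : l.toFinset.card = l.length := List.toFinset_card_of_nodup hndl
    have h2 : l.length = l'.length := by rw [hl, List.length_map]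
    have h3 : l'.length = (S.image f).card := by
      rw [← hfin, List.toFinset_card_of_nodup hnd]
    have h4 : (S.image f).card = S.card := Finset.card_image_of_injOn hinj
    omega
  have hfinS : l.toFinset = S := Finset.eq_of_subset_of_card_le hsub hcard
  refine ⟨l, hndl, hfinS, ?_⟩
  intro i j hij hjl hnot heq
  have hlen : l.length = l'.length := by rw [hl, List.length_map]
  have key : ∀ k, f (PartialSum l k) = PartialSum l' k := by
    intro k
    have h5 : (l.take k).map f = l'.take k := by rw [← hlf, List.map_take]
    rw [PartialSum, PartialSum, ← h5, map_list_prod]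
  exact hps i j hij (hlen ▸ hjl) (by rw [← hlen]; exact hnot)
    (by rw [← key i, ← key j, heq])

attribute [-instance] instDecidableEqSemidirectProduct

/-- if, for infinitely many primes `p`, every subset of `Z_p ⋊_φ H` of type `λ` is
sequenceable, then every subset of `Z ⋊_φ H` of type `λ` is sequenceable. -/
theorem stmt3 (H : Type*) [Group H] [Fintype H] (ε : H →* ℤˣ) (lam : H → ℕ)
    (hp : {p : ℕ | p.Prime ∧
      ∀ S : Finset (Multiplicative (ZMod p) ⋊[signAut (ZMod p) ε] H),
        (1 : Multiplicative (ZMod p) ⋊[signAut (ZMod p) ε] H) ∉ S →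
        (∀ a : H, (S.filter fun g => g.right = a).card = lam a) →
        Sequenceable S}.Infinite)
    (S : Finset (Multiplicative ℤ ⋊[signAut ℤ ε] H))
    (h1 : (1 : Multiplicative ℤ ⋊[signAut ℤ ε] H) ∉ S)
    (hT : ∀ a : H, (S.filter fun g => g.right = a).card = lam a) :
    Sequenceable S := by
  classical
  set M : ℕ := S.sup (fun s => s.left.toAdd.natAbs) with hM
  obtain ⟨p, ⟨hpp, hseq⟩, hplt⟩ := hp.exists_gt (2 * M)
  have hMlt : ∀ s ∈ S, s.left.toAdd.natAbs ≤ M := fun s hs =>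
    Finset.le_sup (f := fun s => s.left.toAdd.natAbs) hs
  -- the reduction hom on the abelian part
  set r : Multiplicative ℤ →* Multiplicative (ZMod p) :=
    AddMonoidHom.toMultiplicative (Int.castAddHom (ZMod p)) with hr
  have compat : ∀ g : H, r.comp ((signAut ℤ ε) g).toMonoidHom
      = ((signAut (ZMod p) ε) g).toMonoidHom.comp r := by
    intro g
    refine MonoidHom.ext fun x => ?_
    show r ((signAut ℤ ε g) x) = (signAut (ZMod p) ε g) (r x)
    simp only [signAut, MonoidHom.mk'_apply, AddEquiv.toMultiplicative_apply_apply,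
      DistribMulAction.toAddAut_apply, hr, AddMonoidHom.toMultiplicative_apply_apply]
    congr 1
    show ((((ε g) • Multiplicative.toAdd x : ℤ) : ℤ) : ZMod p)
        = (ε g) • ((Multiplicative.toAdd x : ℤ) : ZMod p)
    rw [Units.smul_def, Units.smul_def, zsmul_eq_mul, Int.cast_mul]
    simp [zsmul_eq_mul]
  set f := SemidirectProduct.map r (MonoidHom.id H) compat with hf
  -- key injectivity fact on integers small mod p
  have hint : ∀ a b : ℤ, a.natAbs ≤ M → b.natAbs ≤ M → ((a : ZMod p) = (b : ZMod p)) → a = b := by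
    intro a b ha hb hab
    have hmod : (p : ℤ) ∣ b - a := ((ZMod.intCast_eq_intCast_iff a b p).1 hab).dvd
    have : |b - a| < (p : ℤ) := by
      have := abs_sub_abs_le_abs_sub b a
      have h1 : |a| = (a.natAbs : ℤ) := Int.abs_eq_natAbs a
      have h2 : |b| = (b.natAbs : ℤ) := Int.abs_eq_natAbs b
      have h3 : |b - a| ≤ |b| + |a| := abs_sub b a
      have h4 : (2 * M : ℤ) < p := by exact_mod_cast hplt
      omega
    have := Int.eq_zero_of_abs_lt_dvd hmod this
    omega
  have hinj : Set.InjOn f S := by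
    intro x hx y hy hxy
    have hrt : x.right = y.right := by
      have := congrArg SemidirectProduct.right hxy
      simpa [hf] using this
    have hlt : x.left = y.left := by
      have := congrArg SemidirectProduct.left hxy
      simp only [hf, SemidirectProduct.map_left] at this
      have h2 : ((x.left.toAdd : ℤ) : ZMod p) = ((y.left.toAdd : ℤ) : ZMod p) := this
      have := hint _ _ (hMlt x hx) (hMlt y hy) h2
      exact Multiplicative.toAdd.injective this
    exact SemidirectProduct.ext hlt hrt
  apply sequenceable_of_image f S hinj
  apply hseq
  · -- 1 ∉ image
    intro hmem
    rw [Finset.mem_image] at hmem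
    obtain ⟨s, hs, hfs⟩ := hmem
    have hrt : s.right = 1 := by
      have := congrArg SemidirectProduct.right hfs
      simpa [hf] using this
    have hlt : s.left = 1 := by
      have := congrArg SemidirectProduct.left hfs
      simp only [hf, SemidirectProduct.map_left] at this
      have h2 : ((s.left.toAdd : ℤ) : ZMod p) = ((0 : ℤ) : ZMod p) := by
        simpa [hr] using this
      have := hint _ _ (hMlt s hs) (by simp) h2
      have h0 : s.left.toAdd = 0 := this
      have : s.left = Multiplicative.ofAdd 0 := by
        exact Multiplicative.toAdd.injective (by simpa using h0)
      simpa using this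
    have : s = 1 := SemidirectProduct.ext (by simpa using hlt) (by simpa using hrt)
    exact h1 (this ▸ hs)
  · -- type is preserved
    intro a
    rw [Finset.filter_image,
      Finset.card_image_of_injOn (hinj.mono (Finset.coe_subset.2 (Finset.filter_subset _ _)))]
    have hfilt : (S.filter fun x => (f x).right = a) = S.filter fun x => x.right = a := by
      apply Finset.filter_congr
      intro x _
      simp [hf]
    rw [hfilt, hT a]
end

section
/- Let H be a finite group and φ: H → Aut(Z^n) a homomorphism where each φ(h) is either the identity or negation (acting diagonally). Fix a type λ. If every subset of Z ⋊_φ H \ {id} of type λ is sequenceable, then for every n ≥ 2, every subset of Z^n ⋊_φ H \ {id} of type λ is sequenceable. -/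
open scoped Classical

/- ### Auxiliary machinery -/

lemma sum_pow_eq_zero : ∀ {n : ℕ} (v : Fin n → ℤ) (M : ℤ),
    (∀ i, 2 * |v i| < M) → (∑ i, v i * M ^ (i : ℕ)) = 0 → v = 0 := by
  intro n
  induction n with
  | zero => intro v M _ _; ext i; exact i.elim0
  | succ n ih =>
    intro v M hb hs
    rw [Fin.sum_univ_succ] at hs
    have hM0 : 0 < M := lt_of_le_of_lt (by positivity) (hb 0)
    have hfac : ∑ i : Fin n, v i.succ * M ^ ((i.succ : Fin (n+1)) : ℕ)
        = M * ∑ i : Fin n, (v ∘ Fin.succ) i * M ^ (i : ℕ) := by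
      rw [Finset.mul_sum]
      refine Finset.sum_congr rfl fun i _ => ?_
      simp [Fin.val_succ, pow_succ]
      ring
    rw [hfac] at hs
    simp only [Fin.val_zero, pow_zero, mul_one] at hs
    set s := ∑ i : Fin n, (v ∘ Fin.succ) i * M ^ (i : ℕ) with hsdef
    have hdvd : M ∣ v 0 := ⟨-s, by linarith⟩
    have h0 : v 0 = 0 := by
      rcases hdvd with ⟨c, hc⟩
      rcases eq_or_ne c 0 with rfl | hc0
      · simpa using hc
      · exfalso
        have : M * 1 ≤ |v 0| := by
          rw [hc, abs_mul]
          have : (1:ℤ) ≤ |c| := Int.one_le_abs hc0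
          have hM : |M| = M := abs_of_pos hM0
          nlinarith [abs_nonneg (v 0)]
        have := hb 0
        nlinarith [abs_nonneg (v 0)]
    rw [h0, zero_add] at hs
    have hs0 : s = 0 := by
      rcases mul_eq_zero.1 hs with h | h
      · exact absurd h (ne_of_gt hM0)
      · exact h
    have htail : v ∘ Fin.succ = 0 := ih _ M (fun i => hb i.succ) hs0
    ext i
    refine Fin.cases ?_ (fun j => ?_) i
    · simpa using h0
    · simpa using congrFun htail j

section Aux
variable {H : Type*} [Group H] (ε : H →* ℤˣ) {n : ℕ} (M : ℤ)

/-- The evaluation-at-`M` homomorphism `ℤⁿ →+ ℤ`. -/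
noncomputable def fhom : (Fin n → ℤ) →+ ℤ :=
  AddMonoidHom.mk' (fun v => ∑ i, v i * M ^ (i : ℕ))
    (by intro a b; rw [← Finset.sum_add_distrib]
        exact Finset.sum_congr rfl fun i _ => by simp [add_mul])

lemma fhom_apply (v : Fin n → ℤ) : fhom M v = ∑ i, v i * M ^ (i : ℕ) := rfl

/-- The induced homomorphism of semidirect products. -/
noncomputable def Fmap : (Multiplicative (Fin n → ℤ) ⋊[signAut (Fin n → ℤ) ε] H)
    →* (Multiplicative ℤ ⋊[signAut ℤ ε] H) :=
  SemidirectProduct.map (AddMonoidHom.toMultiplicative (fhom M)) (MonoidHom.id H)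
    (by
      intro g
      refine MonoidHom.ext fun x => ?_
      show Multiplicative.ofAdd ((fhom M) ((ε g) • Multiplicative.toAdd x))
        = Multiplicative.ofAdd ((ε g) • (fhom M) (Multiplicative.toAdd x))
      rw [Units.smul_def, Units.smul_def, map_zsmul])

@[simp] lemma Fmap_right (x : Multiplicative (Fin n → ℤ) ⋊[signAut (Fin n → ℤ) ε] H) :
    (Fmap ε M x).right = x.right := rfl

@[simp] lemma Fmap_left (x : Multiplicative (Fin n → ℤ) ⋊[signAut (Fin n → ℤ) ε] H) :
    Multiplicative.toAdd ((Fmap ε M x).left) = (fhom M) (Multiplicative.toAdd x.left) := rfl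

end Aux

/-- if every subset of `Z ⋊_φ H` of type `λ` is sequenceable, then for every
`n ≥ 2`, every subset of `Z^n ⋊_φ H` of type `λ` is sequenceable. -/
theorem stmt4 (H : Type*) [Group H] [Fintype H] (ε : H →* ℤˣ) (lam : H → ℕ)
    (hZ : ∀ S : Finset (Multiplicative ℤ ⋊[signAut ℤ ε] H),
      (1 : Multiplicative ℤ ⋊[signAut ℤ ε] H) ∉ S →
      (∀ a : H, (S.filter fun g => g.right = a).card = lam a) →
      Sequenceable S)
    (n : ℕ) (hn : 2 ≤ n)
    (S : Finset (Multiplicative (Fin n → ℤ) ⋊[signAut (Fin n → ℤ) ε] H))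
    (h1 : (1 : Multiplicative (Fin n → ℤ) ⋊[signAut (Fin n → ℤ) ε] H) ∉ S)
    (hT : ∀ a : H, (S.filter fun g => g.right = a).card = lam a) :
    Sequenceable S := by
  classical
  set B : ℕ := S.sup (fun x => Finset.univ.sup fun i => (Multiplicative.toAdd x.left i).natAbs)
    with hBdef
  set M : ℤ := 4 * B + 1 with hMdef
  set F := Fmap (H := H) ε (n := n) M with hFdef
  -- entry bounds on elements of S
  have hbound : ∀ x ∈ S, ∀ i, |Multiplicative.toAdd x.left i| ≤ (B : ℤ) := by
    intro x hx i
    have h1 : (Multiplicative.toAdd x.left i).natAbs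
        ≤ Finset.univ.sup fun i => (Multiplicative.toAdd x.left i).natAbs :=
      Finset.le_sup (f := fun i => (Multiplicative.toAdd x.left i).natAbs) (Finset.mem_univ i)
    have h2 : (Finset.univ.sup fun i => (Multiplicative.toAdd x.left i).natAbs) ≤ B :=
      Finset.le_sup (f := fun x => Finset.univ.sup
        fun i => (Multiplicative.toAdd x.left i).natAbs) hx
    rw [Int.abs_eq_natAbs]
    exact_mod_cast le_trans h1 h2
  -- the key cancellation property
  have key : ∀ x y : Multiplicative (Fin n → ℤ) ⋊[signAut (Fin n → ℤ) ε] H,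
      (∀ i, |Multiplicative.toAdd x.left i| ≤ (B : ℤ)) →
      (∀ i, |Multiplicative.toAdd y.left i| ≤ (B : ℤ)) → F x = F y → x = y := by
    intro x y hx hy hxy
    have hr : x.right = y.right := by
      have := congrArg SemidirectProduct.right hxy
      simpa [hFdef] using this
    have hl : (fhom M) (Multiplicative.toAdd x.left) = (fhom M) (Multiplicative.toAdd y.left) := by
      have := congrArg (fun z => Multiplicative.toAdd (SemidirectProduct.left z)) hxy
      simpa [hFdef] using this
    have hz : (∑ i, (Multiplicative.toAdd x.left - Multiplicative.toAdd y.left) i * M ^ (i : ℕ))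
        = 0 := by
      rw [← fhom_apply, map_sub, hl, sub_self]
    have hsub : Multiplicative.toAdd x.left - Multiplicative.toAdd y.left = 0 := by
      refine sum_pow_eq_zero _ M (fun i => ?_) hz
      have h1 := hx i
      have h2 := hy i
      have habs : |(Multiplicative.toAdd x.left - Multiplicative.toAdd y.left) i|
          ≤ |Multiplicative.toAdd x.left i| + |Multiplicative.toAdd y.left i| := by
        simpa [Pi.sub_apply] using
          abs_sub (Multiplicative.toAdd x.left i) (Multiplicative.toAdd y.left i)
      rw [hMdef]
      linarith
    have hleft : x.left = y.left := by
      have : Multiplicative.toAdd x.left = Multiplicative.toAdd y.left := by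
        have := sub_eq_zero.1 hsub
        exact this
      exact Multiplicative.toAdd.injective this
    exact SemidirectProduct.ext hleft hr
  have hone : ∀ i, |Multiplicative.toAdd
      (1 : Multiplicative (Fin n → ℤ) ⋊[signAut (Fin n → ℤ) ε] H).left i| ≤ (B : ℤ) := by
    intro i; simp
  have hFinj : Set.InjOn F (S : Set _) := fun x hx y hy =>
    key x y (hbound x hx) (hbound y hy)
  set S' : Finset (Multiplicative ℤ ⋊[signAut ℤ ε] H) := S.image F with hS'def
  have h1' : (1 : Multiplicative ℤ ⋊[signAut ℤ ε] H) ∉ S' := by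
    intro hmem
    rw [hS'def] at hmem
    obtain ⟨x, hx, hx1⟩ := Finset.mem_image.1 hmem
    have : x = 1 := key x 1 (hbound x hx) hone (by rw [hx1, map_one])
    exact h1 (this ▸ hx)
  have hfilter : ∀ a : H, S'.filter (fun g => g.right = a)
      = (S.filter fun g => g.right = a).image F := by
    intro a
    ext y
    constructor
    · intro hy
      obtain ⟨hy1, hy2⟩ := Finset.mem_filter.1 hy
      obtain ⟨x, hx, rfl⟩ := Finset.mem_image.1 hy1
      exact Finset.mem_image.2 ⟨x, Finset.mem_filter.2 ⟨hx, by simpa [hFdef] using hy2⟩, rfl⟩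
    · intro hy
      obtain ⟨x, hx', rfl⟩ := Finset.mem_image.1 hy
      obtain ⟨hx, hr⟩ := Finset.mem_filter.1 hx'
      exact Finset.mem_filter.2 ⟨Finset.mem_image.2 ⟨x, hx, rfl⟩, by simpa [hFdef] using hr⟩
  have hT' : ∀ a : H, (S'.filter fun g => g.right = a).card = lam a := by
    intro a
    rw [hfilter a, Finset.card_image_of_injOn
      (hFinj.mono (by exact_mod_cast Finset.filter_subset _ S)), hT a]
  obtain ⟨l', hnd', htf', hps'⟩ := hZ S' h1' hT'
  -- preimage assignment
  have hex : ∀ y ∈ S', ∃ x, x ∈ S ∧ F x = y := by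
    intro y hy
    rw [hS'def] at hy
    obtain ⟨x, hx, rfl⟩ := Finset.mem_image.1 hy
    exact ⟨x, hx, rfl⟩
  set g : (Multiplicative ℤ ⋊[signAut ℤ ε] H) →
      (Multiplicative (Fin n → ℤ) ⋊[signAut (Fin n → ℤ) ε] H) :=
    fun y => if h : ∃ x, x ∈ S ∧ F x = y then h.choose else 1 with hgdef
  have hg : ∀ y ∈ S', g y ∈ S ∧ F (g y) = y := by
    intro y hy
    have h := hex y hy
    rw [hgdef]
    simp only [dif_pos h]
    exact h.choose_spec
  set l : List (Multiplicative (Fin n → ℤ) ⋊[signAut (Fin n → ℤ) ε] H) := l'.map g with hldef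
  have hmem' : ∀ y ∈ l', y ∈ S' := by
    intro y hy
    rw [← htf']
    exact (@List.mem_toFinset _ (fun a b => Classical.propDecidable (a = b)) _ _).2 hy
  have hmapF : l.map F = l' := by
    rw [hldef, List.map_map]
    have : ∀ y ∈ l', (F ∘ g) y = id y := by
      intro y hy
      exact (hg y (hmem' y hy)).2
    rw [List.map_congr_left this, List.map_id]
  have hnd : l.Nodup := List.Nodup.of_map F (by rw [hmapF]; exact hnd')
  have hlen : l.length = l'.length := by rw [hldef, List.length_map]
  have hiff : ∀ y, y ∈ l ↔ y ∈ S := by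
    intro y
    constructor
    · intro hy
      rw [hldef, List.mem_map] at hy
      obtain ⟨z, hz, rfl⟩ := hy
      exact (hg z (hmem' z hz)).1
    · intro hy
      have hFy : F y ∈ l' := by
        have : F y ∈ S' := Finset.mem_image.2 ⟨y, hy, rfl⟩
        rw [← htf'] at this
        exact (@List.mem_toFinset _ (fun a b => Classical.propDecidable (a = b)) _ _).1 this
      rw [← hmapF, List.mem_map] at hFy
      obtain ⟨z, hz, hzy⟩ := hFy
      have hzS : z ∈ S := by
        rw [hldef, List.mem_map] at hz
        obtain ⟨w, hw, rfl⟩ := hz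
        exact (hg w (hmem' w hw)).1
      have : z = y := hFinj hzS hy hzy
      rwa [← this]
  refine ⟨l, hnd, ?_, ?_⟩
  · refine Finset.ext fun y => ?_
    rw [@List.mem_toFinset _ (fun a b => Classical.propDecidable (a = b))]
    exact hiff y
  have hpartial : ∀ i : ℕ, F (PartialSum l i) = PartialSum l' i := by
    intro i
    unfold PartialSum
    rw [← hmapF, ← List.map_take, map_list_prod]
    rw [List.map_take, List.map_take]
  intro i j hij hj hne heq
  refine hps' i j hij (by rwa [← hlen]) (by rw [← hlen]; exact hne) ?_
  rw [← hpartial i, ← hpartial j, heq]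
end

section
/- Let p > 3 be prime and let S ⊆ D_{2p} \ {id} with |S| = 5 be of type (3,2), i.e., S contains exactly 3 rotations and 2 reflections. Then S has a linear sequencing of the form (x_1·0, x_2·1, x_3·0, x_4·0, x_5·1) whose H-components follow the quotient sequencing (0,1,0,0,1). -/
open scoped Classical

lemma zmod23 (p : ℕ) (hp : p.Prime) (hp3 : 3 < p) : (2 : ZMod p) ≠ 0 ∧ (3 : ZMod p) ≠ 0 := by
  haveI := Fact.mk hp
  haveI : NeZero p := ⟨hp.pos.ne'⟩
  constructor
  · intro h
    have : ((2:ℕ) : ZMod p) = 0 := by push_cast; exact h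
    have := (ZMod.natCast_eq_zero_iff 2 p).mp this
    have := Nat.le_of_dvd (by norm_num) this
    omega
  · intro h
    have : ((3:ℕ) : ZMod p) = 0 := by push_cast; exact h
    have := (ZMod.natCast_eq_zero_iff 3 p).mp this
    have := Nat.le_of_dvd (by norm_num) this
    omega

lemma key {p : ℕ} [Fact p.Prime] (h2 : (2:ZMod p) ≠ 0) (h3 : (3:ZMod p) ≠ 0)
    (a b c d e : ZMod p) (ha : a ≠ 0) (hb : b ≠ 0) (hc : c ≠ 0)
    (hab : a ≠ b) (hac : a ≠ c) (hbc : b ≠ c) (hde : d ≠ e) :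
    ∃ x1 x2 x3 x4 x5 : ZMod p,
      ({x1, x3, x4} : Finset (ZMod p)) = {a, b, c} ∧
      ({x2, x5} : Finset (ZMod p)) = {d, e} ∧
      x1 ≠ x3 ∧ x1 ≠ x4 ∧ x3 ≠ x4 ∧ x2 ≠ x5 ∧
      x1 ≠ 0 ∧ x3 ≠ 0 ∧ x4 ≠ 0 ∧
      x3 + x4 ≠ 0 ∧ x5 - x2 - x3 - x4 ≠ 0 ∧ x5 - x2 + x1 - x3 - x4 ≠ 0 := by
  have cancel3 : ∀ x y : ZMod p, 3 * x = 3 * y → x = y := by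
    intro x y h
    have h' : (3:ZMod p) * (x - y) = 0 := by linear_combination h
    exact sub_eq_zero.mp ((mul_eq_zero.mp h').resolve_left h3)
  have hno3 : ¬(((a+b+c) - a = 0 ∨ 2*(a+b+c) - 3*a = 0) ∧
      ((a+b+c) - b = 0 ∨ 2*(a+b+c) - 3*b = 0) ∧
      ((a+b+c) - c = 0 ∨ 2*(a+b+c) - 3*c = 0)) := by
    rintro ⟨(h1|h1), (hB|hB), (hC|hC)⟩
    · exact hab (by linear_combination hB - h1)
    · exact hab (by linear_combination hB - h1)
    · exact hac (by linear_combination hC - h1)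
    · exact hbc (cancel3 b c (by linear_combination hC - hB))
    · exact hbc (by linear_combination hC - hB)
    · exact hac (cancel3 a c (by linear_combination hC - h1))
    · exact hab (cancel3 a b (by linear_combination hB - h1))
    · exact hab (cancel3 a b (by linear_combination hB - h1))
  have pick : ∃ u w1 w2 : ZMod p,
      ({u, w1, w2} : Finset (ZMod p)) = {a, b, c} ∧
      u ≠ w1 ∧ u ≠ w2 ∧ w1 ≠ w2 ∧ u ≠ 0 ∧ w1 ≠ 0 ∧ w2 ≠ 0 ∧
      u + w1 + w2 = a + b + c ∧ (a+b+c) - u ≠ 0 ∧ 2*(a+b+c) - 3*u ≠ 0 := by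
    by_cases hfa : (a+b+c) - a = 0 ∨ 2*(a+b+c) - 3*a = 0
    · by_cases hfb : (a+b+c) - b = 0 ∨ 2*(a+b+c) - 3*b = 0
      · have hfc : ¬((a+b+c) - c = 0 ∨ 2*(a+b+c) - 3*c = 0) :=
          fun hfc => hno3 ⟨hfa, hfb, hfc⟩
        push_neg at hfc
        exact ⟨c, a, b, by rw [Finset.insert_comm, Finset.pair_comm c b], hac.symm, hbc.symm,
          hab, hc, ha, hb, by ring, hfc.1, hfc.2⟩
      · push_neg at hfb
        exact ⟨b, a, c, by rw [Finset.insert_comm], hab.symm, hbc, hac, hb, ha, hc,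
          by ring, hfb.1, hfb.2⟩
    · push_neg at hfa
      exact ⟨a, b, c, rfl, hab, hac, hbc, ha, hb, hc, by ring, hfa.1, hfa.2⟩
  obtain ⟨u, w1, w2, hperm, huw1, huw2, hw12, hu0, hw10, hw20, hsum, hTu, hstar⟩ := pick
  have hww : w1 + w2 ≠ 0 := fun h => hTu (by linear_combination -hsum + h)
  by_cases hA : e - d - w1 - w2 = 0
  · refine ⟨u, e, w1, w2, d, hperm, Finset.pair_comm e d, huw1, huw2, hw12, hde.symm,
      hu0, hw10, hw20, hww, ?_, ?_⟩
    · intro h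
      have h' : (2:ZMod p) * (w1 + w2) = 0 := by linear_combination -h - hA
      exact hww ((mul_eq_zero.mp h').resolve_left h2)
    · intro h
      exact hstar (by linear_combination -h - hA - 2*hsum)
  · by_cases hB : e - d + u - w1 - w2 = 0
    · refine ⟨u, e, w1, w2, d, hperm, Finset.pair_comm e d, huw1, huw2, hw12, hde.symm,
        hu0, hw10, hw20, hww, ?_, ?_⟩
      · intro h
        exact hstar (by linear_combination -h - hB - 2*hsum)
      · intro h
        have h' : (2:ZMod p) * (d - e) = 0 := by linear_combination h - hB
        exact hde (sub_eq_zero.mp ((mul_eq_zero.mp h').resolve_left h2))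
    · exact ⟨u, d, w1, w2, e, hperm, rfl, huw1, huw2, hw12, hde,
        hu0, hw10, hw20, hww, hA, hB⟩

/-- for prime `p > 3`, a 5-subset of `D_{2p} \ {1}` with exactly 3 rotations and
2 reflections has a linear sequencing whose pattern of components is `(0,1,0,0,1)`. -/
theorem stmt12 (p : ℕ) (hp : p.Prime) (hp3 : 3 < p)
    (S : Finset (DihedralGroup p)) (h1 : (1 : DihedralGroup p) ∉ S) (hcard : S.card = 5)
    (hrot : (S.filter fun g => ∃ i : ZMod p, g = DihedralGroup.r i).card = 3)
    (href : (S.filter fun g => ∃ i : ZMod p, g = DihedralGroup.sr i).card = 2) :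
    ∃ x1 x2 x3 x4 x5 : ZMod p,
      [DihedralGroup.r x1, DihedralGroup.sr x2, DihedralGroup.r x3,
        DihedralGroup.r x4, DihedralGroup.sr x5].Nodup ∧
      [DihedralGroup.r x1, DihedralGroup.sr x2, DihedralGroup.r x3,
        DihedralGroup.r x4, DihedralGroup.sr x5].toFinset = S ∧
      ∀ i j : ℕ, i < j → j ≤ 5 →
        PartialSum [DihedralGroup.r x1, DihedralGroup.sr x2, DihedralGroup.r x3,
          DihedralGroup.r x4, DihedralGroup.sr x5] i ≠
        PartialSum [DihedralGroup.r x1, DihedralGroup.sr x2, DihedralGroup.r x3,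
          DihedralGroup.r x4, DihedralGroup.sr x5] j := by
  haveI := Fact.mk hp
  obtain ⟨h2, h3⟩ := zmod23 p hp hp3
  obtain ⟨g1, g2, g3, h12, h13, h23, hR3⟩ := Finset.card_eq_three.mp hrot
  obtain ⟨g4, g5, h45, hF2⟩ := Finset.card_eq_two.mp href
  have hg1 := (Finset.ext_iff.mp hR3 g1).mpr (by simp)
  have hg2 := (Finset.ext_iff.mp hR3 g2).mpr (by simp)
  have hg3 := (Finset.ext_iff.mp hR3 g3).mpr (by simp)
  have hg4 := (Finset.ext_iff.mp hF2 g4).mpr (by simp)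
  have hg5 := (Finset.ext_iff.mp hF2 g5).mpr (by simp)
  simp only [Finset.mem_filter] at hg1 hg2 hg3 hg4 hg5
  obtain ⟨hg1S, a, rfl⟩ := hg1
  obtain ⟨hg2S, b, rfl⟩ := hg2
  obtain ⟨hg3S, c, rfl⟩ := hg3
  obtain ⟨hg4S, d, rfl⟩ := hg4
  obtain ⟨hg5S, e, rfl⟩ := hg5
  simp only [ne_eq, DihedralGroup.r.injEq] at h12 h13 h23
  simp only [ne_eq, DihedralGroup.sr.injEq] at h45
  have ha : a ≠ 0 := by rintro rfl; exact h1 hg1S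
  have hb : b ≠ 0 := by rintro rfl; exact h1 hg2S
  have hc : c ≠ 0 := by rintro rfl; exact h1 hg3S
  have hS : S = {DihedralGroup.r a, DihedralGroup.r b, DihedralGroup.r c,
      DihedralGroup.sr d, DihedralGroup.sr e} := by
    apply Finset.Subset.antisymm
    · intro g hg
      rcases g with i | i
      · have : DihedralGroup.r i ∈ ({DihedralGroup.r a, DihedralGroup.r b,
            DihedralGroup.r c} : Finset (DihedralGroup p)) := by
          apply (Finset.ext_iff.mp hR3 _).mp
          simp only [Finset.mem_filter]
          exact ⟨hg, i, rfl⟩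
        simp only [Finset.mem_insert, Finset.mem_singleton] at this ⊢
        tauto
      · have : DihedralGroup.sr i ∈ ({DihedralGroup.sr d,
            DihedralGroup.sr e} : Finset (DihedralGroup p)) := by
          apply (Finset.ext_iff.mp hF2 _).mp
          simp only [Finset.mem_filter]
          exact ⟨hg, i, rfl⟩
        simp only [Finset.mem_insert, Finset.mem_singleton] at this ⊢
        tauto
    · intro g hg
      simp only [Finset.mem_insert, Finset.mem_singleton] at hg
      rcases hg with rfl | rfl | rfl | rfl | rfl <;> assumption
  obtain ⟨x1, x2, x3, x4, x5, hset1, hset2, h13', h14', h34', h25', hx10, hx30, hx40,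
    c34, c5, c05⟩ := key h2 h3 a b c d e ha hb hc h12 h13 h23 h45
  -- membership facts
  have m1 : x1 = a ∨ x1 = b ∨ x1 = c := by
    have : x1 ∈ ({a, b, c} : Finset (ZMod p)) := hset1 ▸ (by simp)
    simpa using this
  have m3 : x3 = a ∨ x3 = b ∨ x3 = c := by
    have : x3 ∈ ({a, b, c} : Finset (ZMod p)) := hset1 ▸ (by simp)
    simpa using this
  have m4 : x4 = a ∨ x4 = b ∨ x4 = c := by
    have : x4 ∈ ({a, b, c} : Finset (ZMod p)) := hset1 ▸ (by simp)
    simpa using this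
  have ma : a = x1 ∨ a = x3 ∨ a = x4 := by
    have : a ∈ ({x1, x3, x4} : Finset (ZMod p)) := hset1.symm ▸ (by simp)
    simpa using this
  have mb : b = x1 ∨ b = x3 ∨ b = x4 := by
    have : b ∈ ({x1, x3, x4} : Finset (ZMod p)) := hset1.symm ▸ (by simp)
    simpa using this
  have mc : c = x1 ∨ c = x3 ∨ c = x4 := by
    have : c ∈ ({x1, x3, x4} : Finset (ZMod p)) := hset1.symm ▸ (by simp)
    simpa using this
  have m2 : x2 = d ∨ x2 = e := by
    have : x2 ∈ ({d, e} : Finset (ZMod p)) := hset2 ▸ (by simp)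
    simpa using this
  have m5 : x5 = d ∨ x5 = e := by
    have : x5 ∈ ({d, e} : Finset (ZMod p)) := hset2 ▸ (by simp)
    simpa using this
  have md : d = x2 ∨ d = x5 := by
    have : d ∈ ({x2, x5} : Finset (ZMod p)) := hset2.symm ▸ (by simp)
    simpa using this
  have me : e = x2 ∨ e = x5 := by
    have : e ∈ ({x2, x5} : Finset (ZMod p)) := hset2.symm ▸ (by simp)
    simpa using this
  refine ⟨x1, x2, x3, x4, x5, ?_, ?_, ?_⟩
  · simp only [List.nodup_cons, List.mem_cons, List.not_mem_nil, or_false,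
      DihedralGroup.r.injEq, DihedralGroup.sr.injEq, List.nodup_nil, and_true]
    refine ⟨?_, ?_, ?_, ?_⟩ <;> simp [h13', h14', h34', h25']
  · rw [hS]
    ext g
    simp only [List.toFinset_cons, List.toFinset_nil, LawfulSingleton.insert_empty_eq,
      Finset.mem_insert, Finset.mem_singleton]
    constructor
    · rintro (rfl | rfl | rfl | rfl | rfl)
      · rcases m1 with h | h | h <;> subst h <;> simp
      · rcases m2 with h | h <;> subst h <;> simp
      · rcases m3 with h | h | h <;> subst h <;> simp
      · rcases m4 with h | h | h <;> subst h <;> simp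
      · rcases m5 with h | h <;> subst h <;> simp
    · rintro (rfl | rfl | rfl | rfl | rfl)
      · rcases ma with h | h | h <;> rw [h] <;> simp
      · rcases mb with h | h | h <;> rw [h] <;> simp
      · rcases mc with h | h | h <;> rw [h] <;> simp
      · rcases md with h | h <;> rw [h] <;> simp
      · rcases me with h | h <;> rw [h] <;> simp
  · intro i j hij hj5
    interval_cases j <;> interval_cases i <;>
      simp only [PartialSum, List.take, List.prod_cons, List.prod_nil, mul_one, one_mul,
        DihedralGroup.r_mul_r, DihedralGroup.r_mul_sr, DihedralGroup.sr_mul_r,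
        DihedralGroup.sr_mul_sr, DihedralGroup.one_def, ne_eq, DihedralGroup.r.injEq,
        DihedralGroup.sr.injEq, reduceCtorEq, not_false_eq_true] <;>
      intro h <;>
      first
        | exact hx10 (by linear_combination h)
        | exact hx10 (by linear_combination -h)
        | exact hx30 (by linear_combination h)
        | exact hx30 (by linear_combination -h)
        | exact hx40 (by linear_combination h)
        | exact hx40 (by linear_combination -h)
        | exact c34 (by linear_combination h)
        | exact c34 (by linear_combination -h)
        | exact c5 (by linear_combination h)
        | exact c5 (by linear_combination -h)
        | exact c05 (by linear_combination h)
        | exact c05 (by linear_combination -h)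
end

section
/- Let G = Z_p ⋊_φ H with p prime, let S ⊆ G \ {id} have size k, let t ≥ 2 and h satisfy k − h ≥ 2(t−1) and h ≥ t−1, and let ā ∈ H be an element appearing at least 2(t−1) times among the H-components of elements of S. Then there exist h elements of S, ordered as (x_1·a_1,…,x_h·a_h), such that: (a) the partial sums s_0,…,s_h of this ordering satisfy s_i ≠ s_j whenever 0 ≤ i < j ≤ h and j − i ≤ t; (b) a_h = a_{h−1} = ⋯ = a_{h−t+2} = ā; and (c) at least t−1 of the remaining k−h elements of S have H-component ā. -/
open scoped Classical

section Greedy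

variable {G : Type*} [Group G]

lemma partialSum_append_le (l : List G) (y : G) {i : ℕ} (hi : i ≤ l.length) :
    PartialSum (l ++ [y]) i = PartialSum l i := by
  unfold PartialSum
  rw [List.take_append_of_le_length hi]

lemma partialSum_append_succ (l : List G) (y : G) :
    PartialSum (l ++ [y]) (l.length + 1) = l.prod * y := by
  unfold PartialSum
  rw [List.take_of_length_le (by simp), List.prod_append]
  simp

lemma partialSum_length (l : List G) : PartialSum l l.length = l.prod := by
  unfold PartialSum; rw [List.take_length]

lemma greedy [DecidableEq G] (S : Finset G) (h1 : (1 : G) ∉ S) (Q : G → Prop)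
    (k t h : ℕ) (hcard : S.card = k) (ht : 2 ≤ t)
    (hkh : h + 2 * (t - 1) ≤ k) (hth : t - 1 ≤ h)
    (hQ : 2 * (t - 1) ≤ (S.filter fun g => Q g).card) :
    ∃ l : List G, l.Nodup ∧ l.length = h ∧ l.toFinset ⊆ S ∧
      (∀ i j : ℕ, i < j → j ≤ h → j - i ≤ t → PartialSum l i ≠ PartialSum l j) ∧
      (∀ (i : ℕ) (hi : i < l.length), h - (t - 1) ≤ i → Q (l.get ⟨i, hi⟩)) ∧
      t - 1 ≤ ((S \ l.toFinset).filter fun g => Q g).card := by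
  have key : ∀ n (l : List G), l.Nodup → l.toFinset ⊆ S → l.length + n = h →
      (∀ i j : ℕ, i < j → j ≤ l.length → j - i ≤ t → PartialSum l i ≠ PartialSum l j) →
      (∀ (i : ℕ) (hi : i < l.length), h - (t - 1) ≤ i → Q (l.get ⟨i, hi⟩)) →
      ((t - 1) + (h - l.length) ≤ ((S \ l.toFinset).filter fun g => Q g).card
          + (h - (t - 1) - l.length)) →
      ∃ l' : List G, l'.Nodup ∧ l'.length = h ∧ l'.toFinset ⊆ S ∧
        (∀ i j : ℕ, i < j → j ≤ h → j - i ≤ t → PartialSum l' i ≠ PartialSum l' j) ∧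
        (∀ (i : ℕ) (hi : i < l'.length), h - (t - 1) ≤ i → Q (l'.get ⟨i, hi⟩)) ∧
        t - 1 ≤ ((S \ l'.toFinset).filter fun g => Q g).card := by
    intro n
    induction n with
    | zero =>
      intro l hnd hsub hlen hps hget hinv
      simp only [Nat.add_zero] at hlen
      refine ⟨l, hnd, hlen, hsub, ?_, hget, ?_⟩
      · intro i j hij hjh hd
        exact hps i j hij (by omega) hd
      · omega
    | succ n ih =>
      intro l hnd hsub hlen hps hget hinv
      set j := l.length with hj
      have hjh : j < h := by omega
      -- forbidden set
      set F : Finset G :=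
        (Finset.Ico (j + 1 - t) j).image (fun i => (l.prod)⁻¹ * PartialSum l i) with hFdef
      have hFcard : F.card ≤ t - 1 := by
        refine le_trans Finset.card_image_le ?_
        rw [Nat.card_Ico]; omega
      have pick : ∀ C : Finset G, F.card < C.card → ∃ y ∈ C, y ∉ F := by
        intro C hC
        by_contra hcon
        push_neg at hcon
        exact absurd (Finset.card_le_card hcon) (by omega)
      -- counting facts
      have hSl : (S \ l.toFinset).card = k - j := by
        rw [Finset.card_sdiff_of_subset hsub, List.card_toFinset, hnd.dedup, hcard]
      set A : Finset G := ((S \ l.toFinset).filter fun g => Q g) with hAdef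
      set B : Finset G := ((S \ l.toFinset).filter fun g => ¬ Q g) with hBdef
      have hAB : A.card + B.card = k - j := by
        rw [hAdef, hBdef, Finset.card_filter_add_card_filter_not, hSl]
      -- The main claim: we can choose a suitable next element.
      have hchoice : ∃ y, y ∈ S ∧ y ∉ l.toFinset ∧ y ∉ F ∧
          (h - (t - 1) ≤ j → Q y) ∧
          ((t - 1) + (h - (j + 1)) ≤
            ((S \ (l ++ [y]).toFinset).filter fun g => Q g).card + (h - (t - 1) - (j + 1))) := by
        have hnewA : ∀ y, y ∈ S → y ∉ l.toFinset →
            ((S \ (l ++ [y]).toFinset).filter fun g => Q g) = A.erase y := by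
          intro y hyS hyl
          rw [hAdef]
          ext g
          simp only [Finset.mem_filter, Finset.mem_sdiff, Finset.mem_erase,
            List.toFinset_append, List.toFinset_cons, List.toFinset_nil,
            Finset.mem_union, Finset.mem_insert, Finset.mem_singleton]
          tauto
        by_cases hlate : h - (t - 1) ≤ j
        · -- late phase: pick a Q-element
          have hA : t ≤ A.card := by omega
          obtain ⟨y, hyA, hyF⟩ := pick A (by omega)
          rw [hAdef, Finset.mem_filter, Finset.mem_sdiff] at hyA
          refine ⟨y, hyA.1.1, hyA.1.2, hyF, fun _ => hyA.2, ?_⟩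
          rw [hnewA y hyA.1.1 hyA.1.2, Finset.card_erase_of_mem]
          · omega
          · rw [hAdef, Finset.mem_filter, Finset.mem_sdiff]; exact ⟨⟨hyA.1.1, hyA.1.2⟩, hyA.2⟩
        · by_cases hB : F.card < B.card
          · -- early phase, a non-Q candidate exists
            obtain ⟨y, hyB, hyF⟩ := pick B hB
            rw [hBdef, Finset.mem_filter, Finset.mem_sdiff] at hyB
            refine ⟨y, hyB.1.1, hyB.1.2, hyF, fun hc => absurd hc hlate, ?_⟩
            rw [hnewA y hyB.1.1 hyB.1.2, Finset.erase_eq_of_notMem (by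
              rw [hAdef, Finset.mem_filter]
              exact fun hc => hyB.2 hc.2)]
            omega
          · -- early phase, forced to pick a Q-element; B is small so A is big
            have hA : t ≤ A.card := by omega
            obtain ⟨y, hyA, hyF⟩ := pick A (by omega)
            rw [hAdef, Finset.mem_filter, Finset.mem_sdiff] at hyA
            refine ⟨y, hyA.1.1, hyA.1.2, hyF, fun _ => hyA.2, ?_⟩
            rw [hnewA y hyA.1.1 hyA.1.2, Finset.card_erase_of_mem]
            · omega
            · rw [hAdef, Finset.mem_filter, Finset.mem_sdiff]; exact ⟨⟨hyA.1.1, hyA.1.2⟩, hyA.2⟩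
      obtain ⟨y, hyS, hyl, hyF, hyQ, hinv'⟩ := hchoice
      have hy1 : y ≠ 1 := fun hc => h1 (hc ▸ hyS)
      refine ih (l ++ [y]) ?_ ?_ (by simp; omega) ?_ ?_ (by simpa using hinv')
      · rw [List.nodup_append]
        exact ⟨hnd, List.nodup_singleton y, by
          intro a ha b hb hab; rw [List.mem_singleton] at hb; rw [hab, hb] at ha; revert ha
          exact fun hc => hyl (List.mem_toFinset.mpr hc)⟩
      · intro g hg
        rw [List.mem_toFinset, List.mem_append] at hg
        rcases hg with hg | hg
        · exact hsub (List.mem_toFinset.mpr hg)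
        · rw [List.mem_singleton] at hg; exact hg ▸ hyS
      · -- partial sums
        intro i jj hij hjj hd
        simp only [List.length_append, List.length_singleton] at hjj
        rcases Nat.lt_or_ge jj (j + 1) with hjj' | hjj'
        · have hi : i ≤ l.length := by omega
          have hjjl : jj ≤ l.length := by omega
          rw [partialSum_append_le l y hi, partialSum_append_le l y hjjl]
          exact hps i jj hij hjjl hd
        · have hjjeq : jj = j + 1 := by omega
          subst hjjeq
          rw [partialSum_append_succ l y]
          rcases Nat.lt_or_ge i j with hi | hi
          · have hi' : i ≤ l.length := by omega
            rw [partialSum_append_le l y hi']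
            intro hc
            apply hyF
            rw [hFdef, Finset.mem_image]
            exact ⟨i, Finset.mem_Ico.mpr ⟨by omega, hi⟩, by rw [hc]; group⟩
          · have hieq : i = j := by omega
            subst hieq
            rw [partialSum_append_le l y (le_refl _), partialSum_length]
            intro hc
            exact hy1 (mul_left_cancel (a := l.prod) (by rw [mul_one]; exact hc.symm))
      · -- last elements are Q
        intro i hi hlo
        simp only [List.length_append, List.length_singleton] at hi
        rcases Nat.lt_or_ge i j with hil | hil
        · have := hget i hil hlo
          rw [List.get_eq_getElem] at this ⊢
          rwa [List.getElem_append_left hil]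
        · have hieq : i = j := by omega
          subst hieq
          rw [List.get_eq_getElem, List.getElem_append_right (le_refl _)]
          simp only [Nat.sub_self, List.getElem_singleton]
          exact hyQ hlo
  have base := key h [] (List.nodup_nil) (by simp) (by simp)
    (by intro i jj hij hjj hd; simp at hjj; omega)
    (by intro i hi; simp at hi)
    (by simp only [List.toFinset_nil, Finset.sdiff_empty, List.length_nil]; omega)
  exact base

end Greedy

/-- greedy choice of the first `h` elements. If `ā ∈ H` occurs at least `2(t−1)`
times among the H-components of `S ⊆ (Z_p ⋊_φ H) \ {1}`, `k − h ≥ 2(t−1)` and `h ≥ t−1`, then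
`h` elements of `S` can be ordered so that (a) partial sums at distance `≤ t` differ, (b) the
last `t−1` of them have H-component `ā`, and (c) at least `t−1` remaining elements of `S` have
H-component `ā`. -/
theorem stmt16 (p : ℕ) [Fact p.Prime] (H : Type*) [Group H]
    (φ : H →* MulAut (Multiplicative (ZMod p)))
    (S : Finset (Multiplicative (ZMod p) ⋊[φ] H))
    (h1 : (1 : Multiplicative (ZMod p) ⋊[φ] H) ∉ S)
    (k : ℕ) (hcard : S.card = k)
    (t h : ℕ) (ht : 2 ≤ t) (hkh : h + 2 * (t - 1) ≤ k) (hth : t - 1 ≤ h)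
    (abar : H) (habar : 2 * (t - 1) ≤ (S.filter fun g => g.right = abar).card) :
    ∃ l : List (Multiplicative (ZMod p) ⋊[φ] H),
      l.Nodup ∧ l.length = h ∧ l.toFinset ⊆ S ∧
      (∀ i j : ℕ, i < j → j ≤ h → j - i ≤ t → PartialSum l i ≠ PartialSum l j) ∧
      (∀ (i : ℕ) (hi : i < l.length), h - (t - 1) ≤ i → (l.get ⟨i, hi⟩).right = abar) ∧
      t - 1 ≤ ((S \ l.toFinset).filter fun g => g.right = abar).card := by
  exact greedy S h1 (fun g => g.right = abar) k t h hcard ht hkh hth habar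
end
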